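/- If there exists a covering ⟨T̃, π, φ⟩ of the game tree with taboos T such that π⁻¹(A) is clopen in [T̃], then the game G(A;T) is determined. -/
import Mathlib


universe u v

/-- A game tree: a nonempty set of finite sequences closed under initial segments. -/
def IsGameTree {X : Type*} (T : Set (List X)) : Prop :=
  T.Nonempty ∧ ∀ ⦃p q : List X⦄, q ∈ T → p <+: q → p ∈ T

/-- A terminal position: a position with no proper extension in the tree. -/
def IsTerminal {X : Type*} (T : Set (List X)) (p : List X) : Prop :=
  p ∈ T ∧ ∀ a : X, p ++ [a] ∉ T

/-- A pruned game tree has no terminal positions. -/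
def IsPruned {X : Type*} (T : Set (List X)) : Prop :=
  ∀ p ∈ T, ∃ a : X, p ++ [a] ∈ T

/-- The game subtree at a position `p`. -/
def subtreeAt {X : Type*} (T : Set (List X)) (p : List X) : Set (List X) :=
  {q | q ∈ T ∧ (q <+: p ∨ p <+: q)}

/-- The initial segment of length `n` of an infinite sequence. -/
def prefixFn {X : Type*} (x : ℕ → X) (n : ℕ) : List X :=
  List.ofFn fun i : Fin n => x i

/-- The set of infinite branches through a tree. -/
def body {X : Type*} (T : Set (List X)) : Set (ℕ → X) :=
  {x | ∀ n, prefixFn x n ∈ T}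

/-- `Turn pl n` holds when it is player `pl`'s turn to move at a position of length `n`
(`true` is player I, moving at even stages, `false` is player II). -/
def Turn (pl : Bool) (n : ℕ) : Prop := if pl then Even n else Odd n

/-- A position is consistent with a strategy `σ` for player `pl` if all the moves of
player `pl` along it follow `σ`. -/
def PosConsistent {X : Type*} (pl : Bool) (σ : List X → X) (p : List X) : Prop :=
  ∀ (k : ℕ) (h : k < p.length), Turn pl k → p.get ⟨k, h⟩ = σ (p.take k)

/-- An infinite branch is consistent with a strategy `σ` for player `pl` if all the moves of
player `pl` along it follow `σ`. -/
def BranchConsistent {X : Type*} (pl : Bool) (σ : List X → X) (x : ℕ → X) : Prop :=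
  ∀ k : ℕ, Turn pl k → x k = σ (prefixFn x k)

/-- `σ` is a (legal) strategy for player `pl` in `T`: at any nonterminal position of `T`
consistent with `σ` where it is `pl`'s turn, it produces a legal move. -/
def IsStrategy {X : Type*} (T : Set (List X)) (pl : Bool) (σ : List X → X) : Prop :=
  ∀ p ∈ T, ¬ IsTerminal T p → Turn pl p.length → PosConsistent pl σ p →
    p ++ [σ p] ∈ T


/-- A game tree with taboos: a game tree together with a partition of its terminal
positions into taboos for player I and taboos for player II. -/
structure TabooTree (X : Type*) where
  T : Set (List X)
  isTree : IsGameTree T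
  tabooI : Set (List X)
  tabooII : Set (List X)
  tabooI_terminal : ∀ p ∈ tabooI, IsTerminal T p
  tabooII_terminal : ∀ p ∈ tabooII, IsTerminal T p
  taboo_disjoint : Disjoint tabooI tabooII
  taboo_cover : ∀ p, IsTerminal T p → p ∈ tabooI ∪ tabooII

/-- `σ` is a winning strategy for player I in the game with payoff `A` on the tree `T`
whose taboos for player II are `tabooII`: every finite play (terminal position)
consistent with `σ` is a taboo for II, and every infinite play consistent with `σ` is in `A`. -/
def WinsI {X : Type*} (T tabooII : Set (List X)) (A : Set (ℕ → X)) (σ : List X → X) : Prop :=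
  IsStrategy T true σ ∧
  (∀ p, IsTerminal T p → PosConsistent true σ p → p ∈ tabooII) ∧
  (∀ x ∈ body T, BranchConsistent true σ x → x ∈ A)

/-- `τ` is a winning strategy for player II: every finite play consistent with `τ` is a
taboo for I, and every infinite play consistent with `τ` is outside `A`. -/
def WinsII {X : Type*} (T tabooI : Set (List X)) (A : Set (ℕ → X)) (τ : List X → X) : Prop :=
  IsStrategy T false τ ∧
  (∀ p, IsTerminal T p → PosConsistent false τ p → p ∈ tabooI) ∧
  (∀ x ∈ body T, BranchConsistent false τ x → x ∉ A)

/-- Determinacy of the game on tree `T` with taboos `tI`, `tII` and payoff `A`. -/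
def DeterminedOn {X : Type*} (T tI tII : Set (List X)) (A : Set (ℕ → X)) : Prop :=
  (∃ σ, WinsI T tII A σ) ∨ (∃ τ, WinsII T tI A τ)

/-- Determinacy of the game with taboos `G(A; M)`. -/
def Determined {X : Type*} (M : TabooTree X) (A : Set (ℕ → X)) : Prop :=
  DeterminedOn M.T M.tabooI M.tabooII A


/-- The tree topology on infinite sequences: the product topology of the discrete topology. -/
def treeTopology (X : Type*) : TopologicalSpace (ℕ → X) :=
  @Pi.topologicalSpace ℕ (fun _ => X) (fun _ => ⊥)

/-- `A` is (relatively) open in the branch space `[T]`. -/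
def RelOpen {X : Type*} (T : Set (List X)) (A : Set (ℕ → X)) : Prop :=
  ∃ U : Set (ℕ → X), @IsOpen _ (treeTopology X) U ∧ A = U ∩ body T

/-- `A` is (relatively) closed in the branch space `[T]`. -/
def RelClosed {X : Type*} (T : Set (List X)) (A : Set (ℕ → X)) : Prop :=
  ∃ C : Set (ℕ → X), @IsClosed _ (treeTopology X) C ∧ A = C ∩ body T

/-- `A` is (relatively) clopen in the branch space `[T]`. -/
def RelClopen {X : Type*} (T : Set (List X)) (A : Set (ℕ → X)) : Prop :=
  RelOpen T A ∧ RelClosed T A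


/-- A play of a game tree: either a finite play (a terminal position) or an infinite play. -/
inductive Play (X : Type*) where
  | fin : List X → Play X
  | inf : (ℕ → X) → Play X

/-- `x` is a play of the tree `T`. -/
def IsPlay {X : Type*} (T : Set (List X)) : Play X → Prop
  | .fin p => IsTerminal T p
  | .inf x => x ∈ body T

/-- A play is consistent with the strategy `σ` of player `pl`. -/
def PlayConsistent {X : Type*} (pl : Bool) (σ : List X → X) : Play X → Prop
  | .fin p => PosConsistent pl σ p
  | .inf x => BranchConsistent pl σ x

/-- A play is a taboo for player `pl`. -/
def PlayTabooFor {X : Type*} (M : TabooTree X) (pl : Bool) : Play X → Prop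
  | .fin p => p ∈ (if pl then M.tabooI else M.tabooII)
  | .inf _ => False

/-- A play is an initial segment of another. -/
def Play.le {X : Type*} : Play X → Play X → Prop
  | .fin p, .fin q => p <+: q
  | .fin p, .inf x => p = prefixFn x p.length
  | .inf _, .fin _ => False
  | .inf x, .inf y => x = y

/-- The map on infinite sequences induced by a monotone, length-preserving map on positions. -/
noncomputable def bodyMap {X Y : Type*} [Nonempty X] (π : List Y → List X)
    (x : ℕ → Y) : ℕ → X :=
  fun n => (π (prefixFn x (n + 1))).getD n (Classical.arbitrary X)

/-- The map on plays induced by a position map. -/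
noncomputable def Play.map {X Y : Type*} [Nonempty X] (π : List Y → List X) :
    Play Y → Play X
  | .fin p => .fin (π p)
  | .inf x => .inf (bodyMap π x)


/-- A covering of the game tree with taboos `M` by the game tree with taboos `Tc`:
a position map `π` (monotone, length-preserving, and pulling taboos back to taboos for the
same player) and a strategy map `φ` (mapping strategies to strategies for the same player,
with finite dependence on its argument) satisfying the lifting condition. -/
structure Covering {X Y : Type*} [Nonempty X] (Tc : TabooTree Y) (M : TabooTree X) where
  π : List Y → List X
  π_maps : ∀ p ∈ Tc.T, π p ∈ M.T
  π_mono : ∀ p q : List Y, p ∈ Tc.T → q ∈ Tc.T → p <+: q → π p <+: π q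
  π_len : ∀ p ∈ Tc.T, (π p).length = p.length
  π_tabooI : ∀ p ∈ Tc.T, π p ∈ M.tabooI → p ∈ Tc.tabooI
  π_tabooII : ∀ p ∈ Tc.T, π p ∈ M.tabooII → p ∈ Tc.tabooII
  φ : Bool → (List Y → Y) → (List X → X)
  φ_strategy : ∀ pl σ, IsStrategy Tc.T pl σ → IsStrategy M.T pl (φ pl σ)
  φ_local : ∀ (pl : Bool) (n : ℕ) (σ σ' : List Y → Y),
      (∀ p : List Y, p.length < n → σ p = σ' p) →
      ∀ q : List X, q.length < n → φ pl σ q = φ pl σ' q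
  lifting : ∀ (pl : Bool) (σ : List Y → Y), IsStrategy Tc.T pl σ →
      ∀ x : Play X, IsPlay M.T x → PlayConsistent pl (φ pl σ) x →
        ∃ xt : Play Y, IsPlay Tc.T xt ∧ PlayConsistent pl σ xt ∧
          Play.le (Play.map π xt) x ∧
          (Play.map π xt = x ∨ PlayTabooFor Tc pl xt)


/-- A covering unravels `A` if the preimage of `A` under the induced map on branches
is clopen in the branch space of the covering tree. -/
def Unravels {X Y : Type*} [Nonempty X] {Tc : TabooTree Y} {M : TabooTree X}
    (C : Covering Tc M) (A : Set (ℕ → X)) : Prop :=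
  RelClopen Tc.T (bodyMap C.π ⁻¹' A ∩ body Tc.T)


/- ===================== Auxiliary development for stmt6 ===================== -/

section Stmt6Aux

variable {X : Type*}

/-! ### Turn lemmas -/

lemma turn_false_iff_not_true (k : ℕ) : Turn false k ↔ ¬ Turn true k := by
  simp only [Turn, if_true, if_false, Bool.false_eq_true, ite_false, ite_true]
  exact Nat.not_even_iff_odd.symm

/-! ### prefixFn lemmas -/

lemma prefixFn_length (x : ℕ → X) (n : ℕ) : (prefixFn x n).length = n := by
  simp [prefixFn]

lemma prefixFn_getElem (x : ℕ → X) {n k : ℕ} (h : k < (prefixFn x n).length) :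
    (prefixFn x n)[k] = x k := by
  simp [prefixFn]

lemma prefixFn_zero (x : ℕ → X) : prefixFn x 0 = [] := by
  simp [prefixFn]

lemma prefixFn_succ (x : ℕ → X) (n : ℕ) : prefixFn x (n + 1) = prefixFn x n ++ [x n] := by
  simp only [prefixFn, List.ofFn_succ', List.concat_eq_append, Fin.coe_castSucc, Fin.val_last]

lemma prefixFn_take (x : ℕ → X) {k n : ℕ} (h : k ≤ n) :
    (prefixFn x n).take k = prefixFn x k := by
  apply List.ext_getElem
  · simp [prefixFn, h]
  · intro i h1 h2
    simp only [List.getElem_take, prefixFn_getElem]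

lemma prefixFn_prefix (x : ℕ → X) {k n : ℕ} (h : k ≤ n) : prefixFn x k <+: prefixFn x n := by
  rw [← prefixFn_take x h]; exact List.take_prefix _ _

lemma prefixFn_eq_iff {x y : ℕ → X} {n : ℕ} :
    prefixFn x n = prefixFn y n ↔ ∀ k < n, x k = y k := by
  constructor
  · intro h k hk
    have h1 : (prefixFn x n)[k]? = (prefixFn y n)[k]? := by rw [h]
    rw [List.getElem?_eq_getElem (by simpa [prefixFn_length] using hk),
        List.getElem?_eq_getElem (by simpa [prefixFn_length] using hk)] at h1
    simpa [prefixFn_getElem] using h1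
  · intro h
    apply List.ext_getElem (by simp [prefixFn_length])
    intro i h1 h2
    rw [prefixFn_getElem, prefixFn_getElem]
    exact h i (by simpa [prefixFn_length] using h1)

/-! ### tree lemmas -/

lemma take_mem {T : Set (List X)} (hT : IsGameTree T) {q : List X} (hq : q ∈ T) (n : ℕ) :
    q.take n ∈ T :=
  hT.2 hq (List.take_prefix _ _)

lemma take_succ_get {q : List X} {n : ℕ} (h : n < q.length) :
    q.take (n + 1) = q.take n ++ [q.get ⟨n, h⟩] := by
  rw [List.take_succ, List.getElem?_eq_getElem h]
  simp

lemma eq_of_terminal {T : Set (List X)} (hT : IsGameTree T) {p q : List X}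
    (hp : IsTerminal T p) (hq : q ∈ T) (h : p <+: q) : q = p := by
  by_contra hne
  have hlt : p.length < q.length :=
    lt_of_le_of_ne h.length_le (fun e => hne (h.eq_of_length e).symm)
  have h1 : q.take (p.length + 1) ∈ T := take_mem hT hq _
  rw [take_succ_get hlt, ← List.prefix_iff_eq_take.mp h] at h1
  exact hp.2 _ h1

lemma cons_extend {p q : List X} (hpq : p <+: q) (hlt : p.length < q.length) :
    p ++ [q.get ⟨p.length, hlt⟩] <+: q := by
  have h1 : q.take (p.length + 1) = p ++ [q.get ⟨p.length, hlt⟩] := by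
    rw [take_succ_get hlt, ← List.prefix_iff_eq_take.mp hpq]
  rw [← h1]; exact List.take_prefix _ _

end Stmt6Aux


section Stmt6Aux2

variable {X : Type*}

/-- Consistency with `σ` (for player `pl`) at all moves from position `p` onwards. -/
def ConsFrom (pl : Bool) (σ : List X → X) (p q : List X) : Prop :=
  ∀ (k : ℕ) (h : k < q.length), p.length ≤ k → Turn pl k → q.get ⟨k, h⟩ = σ (q.take k)

/-- Branch consistency with `σ` from position `p` onwards. -/
def BConsFrom (pl : Bool) (σ : List X → X) (p : List X) (x : ℕ → X) : Prop :=
  ∀ k : ℕ, p.length ≤ k → Turn pl k → x k = σ (prefixFn x k)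

lemma consFrom_nil {pl : Bool} {σ : List X → X} {q : List X} :
    ConsFrom pl σ [] q ↔ PosConsistent pl σ q :=
  ⟨fun h k hk => h k hk (Nat.zero_le _), fun h k hk _ => h k hk⟩

lemma bconsFrom_nil {pl : Bool} {σ : List X → X} {x : ℕ → X} :
    BConsFrom pl σ [] x ↔ BranchConsistent pl σ x :=
  ⟨fun h k => h k (Nat.zero_le _), fun h k _ => h k⟩

lemma ConsFrom.take {pl : Bool} {σ : List X → X} {p q : List X}
    (h : ConsFrom pl σ p q) (m : ℕ) : ConsFrom pl σ p (q.take m) := by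
  intro k hk hp ht
  have hkm : k < m := lt_of_lt_of_le hk (by simp [List.length_take])
  have hkq : k < q.length := lt_of_lt_of_le hk (by simp [List.length_take])
  have hget : (q.take m).get ⟨k, hk⟩ = q.get ⟨k, hkq⟩ := by
    simp [List.get_eq_getElem, List.getElem_take]
  rw [hget, List.take_take, min_eq_left hkm.le]
  exact h k hkq hp ht

lemma posConsistent_take {pl : Bool} {σ : List X → X} {q : List X}
    (h : PosConsistent pl σ q) (m : ℕ) : PosConsistent pl σ (q.take m) :=
  consFrom_nil.mp ((consFrom_nil.mpr h).take m)

lemma branchConsistent_prefix {pl : Bool} {σ : List X → X} {x : ℕ → X}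
    (h : BranchConsistent pl σ x) (n : ℕ) : PosConsistent pl σ (prefixFn x n) := by
  intro k hk ht
  have hk' : k < n := by simpa [prefixFn_length] using hk
  rw [List.get_eq_getElem, prefixFn_getElem, prefixFn_take x hk'.le]
  exact h k ht

/-- `σ` is legal for `pl` at all positions extending `p` consistent with `σ` from `p`. -/
def StratFrom (T : Set (List X)) (pl : Bool) (σ : List X → X) (p : List X) : Prop :=
  ∀ q ∈ T, p <+: q → ¬ IsTerminal T q → Turn pl q.length → ConsFrom pl σ p q →
    q ++ [σ q] ∈ T

/-- `σ` wins for `pl` from `p`: finite consistent plays satisfy `Pfin`,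
infinite consistent plays satisfy `Pinf`. -/
def WinsFrom (T : Set (List X)) (pl : Bool) (Pfin : List X → Prop)
    (Pinf : (ℕ → X) → Prop) (p : List X) (σ : List X → X) : Prop :=
  StratFrom T pl σ p ∧
  (∀ q, p <+: q → IsTerminal T q → ConsFrom pl σ p q → Pfin q) ∧
  (∀ x ∈ body T, prefixFn x p.length = p → BConsFrom pl σ p x → Pinf x)

end Stmt6Aux2


section Stmt6Aux3

variable {X : Type*} [Nonempty X]

lemma glue_own {T : Set (List X)} {pl : Bool} {Pfin : List X → Prop}
    {Pinf : (ℕ → X) → Prop} {p : List X} {a : X}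
    (hpa : p ++ [a] ∈ T) (hturn : Turn pl p.length)
    (h : ∃ σ, WinsFrom T pl Pfin Pinf (p ++ [a]) σ) :
    ∃ σ, WinsFrom T pl Pfin Pinf p σ := by
  classical
  obtain ⟨σc, hs, hf, hb⟩ := h
  set σ : List X → X := fun q => if q.length ≤ p.length then a else σc q with hσdef
  have hσp : ∀ r : List X, r.length ≤ p.length → σ r = a := fun r h => if_pos h
  have hσl : ∀ r : List X, p.length < r.length → σ r = σc r :=
    fun r h => if_neg (not_le.mpr h)
  have hlen : (p ++ [a]).length = p.length + 1 := by simp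
  have key : ∀ q, p <+: q → (hlt : p.length < q.length) → ConsFrom pl σ p q →
      p ++ [a] <+: q ∧ ConsFrom pl σc (p ++ [a]) q := by
    intro q hpq hlt hc
    have hga : q.get ⟨p.length, hlt⟩ = a := by
      rw [hc p.length hlt le_rfl hturn]
      exact hσp _ (by simp [List.length_take])
    constructor
    · have h1 := cons_extend hpq hlt
      rwa [hga] at h1
    · intro k hk hge ht
      rw [hlen] at hge
      rw [hc k hk (by omega) ht]
      exact hσl (q.take k) (by simp [List.length_take]; omega)
  refine ⟨σ, ?_, ?_, ?_⟩
  · intro q hq hpq hnt ht hc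
    rcases eq_or_ne q p with rfl | hne
    · rw [hσp q le_rfl]; exact hpa
    · have hlt : p.length < q.length :=
        lt_of_le_of_ne hpq.length_le (fun e => hne ((hpq.eq_of_length e).symm))
      obtain ⟨hpre, hcc⟩ := key q hpq hlt hc
      rw [hσl q hlt]
      exact hs q hq hpre hnt ht hcc
  · intro q hpq hterm hc
    rcases eq_or_ne q p with rfl | hne
    · exact absurd hpa (hterm.2 a)
    · have hlt : p.length < q.length :=
        lt_of_le_of_ne hpq.length_le (fun e => hne ((hpq.eq_of_length e).symm))
      obtain ⟨hpre, hcc⟩ := key q hpq hlt hc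
      exact hf q hpre hterm hcc
  · intro x hx hpre hbc
    have hxa : x p.length = a := by
      rw [hbc p.length le_rfl hturn]
      exact hσp _ (by simp [prefixFn_length])
    have hpre2 : prefixFn x (p ++ [a]).length = p ++ [a] := by
      rw [hlen, prefixFn_succ, hpre, hxa]
    refine hb x hx hpre2 ?_
    intro k hge ht
    rw [hlen] at hge
    rw [hbc k (by omega) ht]
    exact hσl (prefixFn x k) (by simp [prefixFn_length]; omega)

lemma glue_opp {T : Set (List X)} (hT : IsGameTree T) {pl : Bool} {Pfin : List X → Prop}
    {Pinf : (ℕ → X) → Prop} {p : List X}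
    (hnt : ∃ a, p ++ [a] ∈ T) (hturn : ¬ Turn pl p.length)
    (H : ∀ a, p ++ [a] ∈ T → ∃ σ, WinsFrom T pl Pfin Pinf (p ++ [a]) σ) :
    ∃ σ, WinsFrom T pl Pfin Pinf p σ := by
  classical
  choose F hF using H
  set σ : List X → X := fun q =>
    if h : ∃ b, p ++ [b] <+: q ∧ p ++ [b] ∈ T then
      F (Classical.choose h) (Classical.choose_spec h).2 q
    else Classical.arbitrary X with hσdef
  have hσval : ∀ (a : X) (h2 : p ++ [a] ∈ T) (q : List X), p ++ [a] <+: q →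
      σ q = F a h2 q := by
    intro a h2 q hpre
    have hex : ∃ b, p ++ [b] <+: q ∧ p ++ [b] ∈ T := ⟨a, hpre, h2⟩
    have hab : Classical.choose hex = a := by
      obtain ⟨hpre', _⟩ := Classical.choose_spec hex
      have hleq : p ++ [Classical.choose hex] = p ++ [a] := by
        rw [List.prefix_iff_eq_take.mp hpre', List.prefix_iff_eq_take.mp hpre]
        simp
      simpa using hleq
    have haux : ∀ (b : X) (hb : p ++ [b] ∈ T), b = a → F b hb q = F a h2 q := by
      rintro b hb rfl; rfl
    calc σ q = F (Classical.choose hex) (Classical.choose_spec hex).2 q := dif_pos hex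
    _ = F a h2 q := haux _ _ hab
  have hlen : ∀ b : X, (p ++ [b]).length = p.length + 1 := by simp
  have key : ∀ q, q ∈ T → p <+: q → (hlt : p.length < q.length) → ConsFrom pl σ p q →
      ∃ (b : X) (h2 : p ++ [b] ∈ T), p ++ [b] <+: q ∧ ConsFrom pl (F b h2) (p ++ [b]) q := by
    intro q hq hpq hlt hc
    set b := q.get ⟨p.length, hlt⟩ with hb
    have hpre : p ++ [b] <+: q := cons_extend hpq hlt
    have h2 : p ++ [b] ∈ T := hT.2 hq hpre
    refine ⟨b, h2, hpre, ?_⟩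
    intro k hk hge ht
    rw [hlen] at hge
    rw [hc k hk (by omega) ht]
    exact hσval b h2 (q.take k)
      (List.prefix_take_iff.mpr ⟨hpre, by rw [hlen]; omega⟩)
  refine ⟨σ, ?_, ?_, ?_⟩
  · intro q hq hpq hntq ht hc
    have hne : q ≠ p := by
      rintro rfl; exact hturn ht
    have hlt : p.length < q.length :=
      lt_of_le_of_ne hpq.length_le (fun e => hne ((hpq.eq_of_length e).symm))
    obtain ⟨b, h2, hpre, hcc⟩ := key q hq hpq hlt hc
    rw [hσval b h2 q hpre]
    exact (hF b h2).1 q hq hpre hntq ht hcc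
  · intro q hpq hterm hc
    have hne : q ≠ p := by
      rintro rfl
      obtain ⟨a, ha⟩ := hnt
      exact hterm.2 a ha
    have hlt : p.length < q.length :=
      lt_of_le_of_ne hpq.length_le (fun e => hne ((hpq.eq_of_length e).symm))
    obtain ⟨b, h2, hpre, hcc⟩ := key q hterm.1 hpq hlt hc
    exact (hF b h2).2.1 q hpre hterm hcc
  · intro x hx hpre hbc
    set b := x p.length with hbdef
    have hpre2 : prefixFn x (p.length + 1) = p ++ [b] := by
      rw [prefixFn_succ, hpre]
    have h2 : p ++ [b] ∈ T := by rw [← hpre2]; exact hx _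
    have hpre3 : prefixFn x (p ++ [b]).length = p ++ [b] := by rw [hlen, hpre2]
    refine (hF b h2).2.2 x hx hpre3 ?_
    intro k hge ht
    rw [hlen] at hge
    rw [hbc k (by omega) ht]
    refine hσval b h2 (prefixFn x k) ?_
    rw [← hpre2]
    exact prefixFn_prefix x (by omega)

end Stmt6Aux3


section Stmt6Aux4

/-- Player `pl` can force reaching the target set `tgt` in the tree `T`. -/
inductive Forces {X : Type*} (T tgt : Set (List X)) (pl : Bool) : List X → Prop
  | base (p : List X) : p ∈ tgt → Forces T tgt pl p
  | own (p : List X) (a : X) : p ∈ T → Turn pl p.length → p ++ [a] ∈ T →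
      Forces T tgt pl (p ++ [a]) → Forces T tgt pl p
  | opp (p : List X) : p ∈ T → ¬ Turn pl p.length → (∃ a, p ++ [a] ∈ T) →
      (∀ a, p ++ [a] ∈ T → Forces T tgt pl (p ++ [a])) → Forces T tgt pl p

variable {X : Type*} [Nonempty X]

lemma wins_of_terminal {T : Set (List X)} (hT : IsGameTree T) {pl : Bool}
    {Pfin : List X → Prop} {Pinf : (ℕ → X) → Prop} {p : List X}
    (hterm : IsTerminal T p) (hfin : Pfin p) :
    ∃ σ, WinsFrom T pl Pfin Pinf p σ := by
  refine ⟨fun _ => Classical.arbitrary X, ?_, ?_, ?_⟩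
  · intro q hq hpq hnt _ _
    have he : q = p := eq_of_terminal hT hterm hq hpq
    rw [he] at hnt
    exact absurd hterm hnt
  · intro q hpq hterm' _
    rw [eq_of_terminal hT hterm hterm'.1 hpq]
    exact hfin
  · intro x hx hpre _
    exfalso
    have h1 : prefixFn x (p.length + 1) ∈ T := hx _
    rw [prefixFn_succ, hpre] at h1
    exact hterm.2 _ h1

lemma forces_wins {T tgt : Set (List X)} (hT : IsGameTree T) {pl : Bool}
    {Pfin : List X → Prop} {Pinf : (ℕ → X) → Prop}
    (hbase : ∀ q ∈ tgt, ∃ σ, WinsFrom T pl Pfin Pinf q σ) :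
    ∀ q, Forces T tgt pl q → ∃ σ, WinsFrom T pl Pfin Pinf q σ := by
  intro q hq
  induction hq with
  | base p hp => exact hbase p hp
  | own p a hp ht ha _ ih => exact glue_own ha ht ih
  | opp p hp ht hex _ ih => exact glue_opp hT hex ht ih

/-- The safety strategy for I: from a position with `¬ Forces T tI false`, stay in
such positions; all finite consistent plays end in `tII`, all branches stay in the cylinder. -/
lemma wins_safe {T tI tII : Set (List X)} (hT : IsGameTree T)
    (hcover : ∀ p, IsTerminal T p → p ∈ tI ∪ tII) {U : Set (ℕ → X)} {p : List X}
    (hp : p ∈ T) (hcyl : ∀ x : ℕ → X, prefixFn x p.length = p → x ∈ U)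
    (hnf : ¬ Forces T tI false p) :
    ∃ σ, WinsFrom T true (· ∈ tII) (· ∈ U) p σ := by
  classical
  have step : ∀ q, q ∈ T → ¬ Forces T tI false q → Turn true q.length → ¬ IsTerminal T q →
      ∃ a, q ++ [a] ∈ T ∧ ¬ Forces T tI false (q ++ [a]) := by
    intro q hq hnfq ht hntq
    by_contra hcon
    push_neg at hcon
    apply hnfq
    refine Forces.opp q hq ?_ ?_ ?_
    · rw [turn_false_iff_not_true]
      exact not_not_intro ht
    · simpa [IsTerminal, hq] using hntq
    · exact hcon
  set σs : List X → X := fun q =>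
    if h : q ∈ T ∧ ¬ Forces T tI false q ∧ Turn true q.length ∧ ¬ IsTerminal T q then
      Classical.choose (step q h.1 h.2.1 h.2.2.1 h.2.2.2)
    else Classical.arbitrary X with hσsdef
  have hσs : ∀ q (h : q ∈ T ∧ ¬ Forces T tI false q ∧ Turn true q.length ∧ ¬ IsTerminal T q),
      q ++ [σs q] ∈ T ∧ ¬ Forces T tI false (q ++ [σs q]) := by
    intro q h
    have : σs q = Classical.choose (step q h.1 h.2.1 h.2.2.1 h.2.2.2) := dif_pos h
    rw [this]
    exact Classical.choose_spec (step q h.1 h.2.1 h.2.2.1 h.2.2.2)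
  have inv : ∀ (n : ℕ) (q : List X), q ∈ T → p <+: q → q.length = p.length + n →
      ConsFrom true σs p q → ¬ Forces T tI false q := by
    intro n
    induction n with
    | zero =>
      intro q hq hpq hl _
      have : p = q := hpq.eq_of_length (by omega)
      rw [← this]
      exact hnf
    | succ n IH =>
      intro q hq hpq hl hc
      have hmlt : p.length + n < q.length := by omega
      set q' := q.take (p.length + n) with hq'def
      have hq'T : q' ∈ T := take_mem hT hq _
      have hpq' : p <+: q' := List.prefix_take_iff.mpr ⟨hpq, by omega⟩
      have hq'len : q'.length = p.length + n := by
        simp [hq'def, List.length_take]; omega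
      have hnf' := IH q' hq'T hpq' hq'len (hc.take _)
      have hqeq : q = q' ++ [q.get ⟨p.length + n, hmlt⟩] := by
        rw [hq'def, ← take_succ_get hmlt]
        rw [show p.length + n + 1 = q.length by omega, List.take_length]
      by_cases ht : Turn true (p.length + n)
      · have hget := hc (p.length + n) hmlt (by omega) ht
        have hcond : q' ∈ T ∧ ¬ Forces T tI false q' ∧ Turn true q'.length ∧
            ¬ IsTerminal T q' := by
          refine ⟨hq'T, hnf', by rwa [hq'len], fun hterm => hterm.2 _ (hqeq ▸ hq)⟩
        have hspec := hσs q' hcond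
        rw [hqeq, hget]
        exact hspec.2
      · intro hfq
        refine hnf' (Forces.own q' (q.get ⟨p.length + n, hmlt⟩) hq'T ?_ (hqeq ▸ hq) (hqeq ▸ hfq))
        rw [hq'len, turn_false_iff_not_true]
        exact ht
  refine ⟨σs, ?_, ?_, ?_⟩
  · intro q hq hpq hntq ht hc
    have hnfq := inv (q.length - p.length) q hq hpq (by have := hpq.length_le; omega) hc
    exact (hσs q ⟨hq, hnfq, ht, hntq⟩).1
  · intro q hpq hterm hc
    have hnfq := inv (q.length - p.length) q hterm.1 hpq (by have := hpq.length_le; omega) hc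
    have hq1 : q ∉ tI := fun hh => hnfq (Forces.base q hh)
    rcases hcover q hterm with hh | hh
    · exact absurd hh hq1
    · exact hh
  · intro x hx hpre _
    exact hcyl x hpre

lemma exists_cyl {U : Set (ℕ → X)} (hU : @IsOpen _ (treeTopology X) U) {x : ℕ → X}
    (hx : x ∈ U) : ∃ n, ∀ y : ℕ → X, prefixFn y n = prefixFn x n → y ∈ U := by
  obtain ⟨I, u, h1, h2⟩ := (@isOpen_pi_iff ℕ (fun _ => X) (fun _ => ⊥) U).mp hU x hx
  refine ⟨(I.sup id) + 1, fun y hy => h2 ?_⟩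
  intro i hi
  have hiI : i ≤ I.sup id := Finset.le_sup (f := id) hi
  have hyx : y i = x i := prefixFn_eq_iff.mp hy i (by omega)
  rw [hyx]
  exact (h1 i hi).2

end Stmt6Aux4


section Stmt6Aux5

variable {X : Type*}

/-- The cylinder above `q` is contained in `U`. -/
def PCyl (U : Set (ℕ → X)) (q : List X) : Prop :=
  ∀ x : ℕ → X, prefixFn x q.length = q → x ∈ U

/-- `q` is decided in favor of I modulo the reach-game: cylinder in `U` and II cannot
force `tI` from `q`. -/
def PP (T tI : Set (List X)) (U : Set (ℕ → X)) (q : List X) : Prop :=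
  PCyl U q ∧ Forces T tI false q

def BadP (T tI : Set (List X)) (U : Set (ℕ → X)) (q : List X) : Prop :=
  ∃ n, n ≤ q.length ∧ PP T tI U (q.take n)

open Classical in
noncomputable def nfF (T tI : Set (List X)) (U : Set (ℕ → X)) (q : List X) : ℕ :=
  if h : BadP T tI U q then Nat.find h else 0

open Classical in
lemma nfF_spec {T tI : Set (List X)} {U : Set (ℕ → X)} {q : List X} (h : BadP T tI U q) :
    (nfF T tI U q ≤ q.length ∧ PP T tI U (q.take (nfF T tI U q))) ∧
    ∀ k < nfF T tI U q, ¬ (k ≤ q.length ∧ PP T tI U (q.take k)) := by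
  unfold nfF
  rw [dif_pos h]
  exact ⟨Nat.find_spec h, fun k hk hc => Nat.find_min h hk hc⟩

lemma takeP {T tI : Set (List X)} {U : Set (ℕ → X)} (q : List X) (m n : ℕ)
    (hnm : n ≤ m) (hm : m ≤ q.length) :
    (n ≤ (q.take m).length ∧ PP T tI U ((q.take m).take n)) ↔
    (n ≤ q.length ∧ PP T tI U (q.take n)) := by
  rw [List.take_take, min_eq_left hnm, List.length_take, min_eq_left hm]
  exact ⟨fun ⟨_, h⟩ => ⟨le_trans hnm hm, h⟩, fun ⟨_, h⟩ => ⟨hnm, h⟩⟩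

lemma badP_mono {T tI : Set (List X)} {U : Set (ℕ → X)} (q : List X) (m : ℕ)
    (hm : m ≤ q.length) (h : BadP T tI U (q.take m)) : BadP T tI U q := by
  obtain ⟨n, hn⟩ := h
  have hnm : n ≤ m := le_trans hn.1 (by rw [List.length_take]; exact min_le_left _ _)
  exact ⟨n, (takeP q m n hnm hm).mp hn⟩

lemma nfF_eq {T tI : Set (List X)} {U : Set (ℕ → X)} (q : List X) (m : ℕ)
    (hm : m ≤ q.length) (hb : BadP T tI U (q.take m)) :
    nfF T tI U q = nfF T tI U (q.take m) := by
  have hbq : BadP T tI U q := badP_mono q m hm hb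
  obtain ⟨hs1, hm1⟩ := nfF_spec hb
  obtain ⟨hs2, hm2⟩ := nfF_spec hbq
  have hle1 : nfF T tI U (q.take m) ≤ m :=
    le_trans hs1.1 (by rw [List.length_take]; exact min_le_left _ _)
  apply le_antisymm
  · by_contra hlt
    push_neg at hlt
    exact hm2 _ hlt ((takeP q m _ hle1 hm).mp hs1)
  · by_contra hlt
    push_neg at hlt
    have hnfq_le : nfF T tI U q ≤ m := by omega
    exact hm1 _ hlt ((takeP q m _ hnfq_le hm).mpr hs2)

theorem open_determined [Nonempty X] (T tI tII : Set (List X)) (hT : IsGameTree T)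
    (htI : ∀ p ∈ tI, IsTerminal T p) (htII : ∀ p ∈ tII, IsTerminal T p)
    (hcover : ∀ p, IsTerminal T p → p ∈ tI ∪ tII)
    (U : Set (ℕ → X)) (hU : @IsOpen _ (treeTopology X) U) :
    DeterminedOn T tI tII (U ∩ body T) := by
  classical
  set tgtI : Set (List X) :=
    {q | q ∈ tII ∨ (q ∈ T ∧ PCyl U q ∧ ¬ Forces T tI false q)} with htgtI
  have hbaseI : ∀ q ∈ tgtI, ∃ σ, WinsFrom T true (· ∈ tII) (· ∈ U) q σ := by
    rintro q (hq | ⟨hq, hcyl, hnf⟩)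
    · exact wins_of_terminal hT (htII q hq) hq
    · exact wins_safe hT hcover hq hcyl hnf
  by_cases hW : Forces T tgtI true []
  · left
    obtain ⟨σ, hs, hf, hb⟩ := forces_wins hT hbaseI [] hW
    refine ⟨σ, ?_, ?_, ?_⟩
    · intro q hq hnt ht hpc
      exact hs q hq List.nil_prefix hnt ht (consFrom_nil.mpr hpc)
    · intro q hterm hpc
      exact hf q List.nil_prefix hterm (consFrom_nil.mpr hpc)
    · intro x hx hbc
      refine ⟨hb x hx ?_ (bconsFrom_nil.mpr hbc), hx⟩
      simp [prefixFn_zero]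
  · right
    have hreach : ∀ q, Forces T tI false q →
        ∃ σ, WinsFrom T false (· ∈ tI) (fun _ => False) q σ :=
      forces_wins hT (fun q hq => wins_of_terminal hT (htI q hq) hq)
    set σR : List X → (List X → X) := fun q =>
      if h : Forces T tI false q then Classical.choose (hreach q h)
      else fun _ => Classical.arbitrary X with hσRdef
    have hσR : ∀ q, Forces T tI false q →
        WinsFrom T false (· ∈ tI) (fun _ => False) q (σR q) := by
      intro q h
      have he : σR q = Classical.choose (hreach q h) := by
        simp only [hσRdef]; rw [dif_pos h]
      rw [he]
      exact Classical.choose_spec (hreach q h)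
    set τ : List X → X := fun q =>
      if h : BadP T tI U q then σR (q.take (nfF T tI U q)) q
      else if h2 : q ∈ T ∧ ¬ Forces T tgtI true q ∧ Turn false q.length ∧
          ∃ a, q ++ [a] ∈ T ∧ ¬ Forces T tgtI true (q ++ [a]) then
        Classical.choose h2.2.2.2
      else Classical.arbitrary X with hτdef
    have hτ1 : ∀ q, BadP T tI U q → τ q = σR (q.take (nfF T tI U q)) q := by
      intro q h
      simp only [hτdef]; rw [dif_pos h]
    -- the main invariant along consistent positions
    have inv : ∀ (n : ℕ) (q : List X), q ∈ T → q.length = n → PosConsistent false τ q →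
        (BadP T tI U q →
          ConsFrom false (σR (q.take (nfF T tI U q))) (q.take (nfF T tI U q)) q) ∧
        (¬ BadP T tI U q → ¬ Forces T tgtI true q) := by
      intro n
      induction n with
      | zero =>
        intro q hq hlen hpc
        constructor
        · intro _ k hk _ _
          exact absurd hk (by omega)
        · intro _
          rw [List.length_eq_zero_iff.mp hlen]
          exact hW
      | succ n IH =>
        intro q hq hlen hpc
        have hnlt : n < q.length := by omega
        have hq'T : q.take n ∈ T := take_mem hT hq n
        have hq'len : (q.take n).length = n := by rw [List.length_take]; omega
        obtain ⟨ih1, ih2⟩ := IH (q.take n) hq'T hq'len (posConsistent_take hpc n)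
        have hqeq : q = q.take n ++ [q.get ⟨n, hnlt⟩] := by
          rw [← take_succ_get hnlt, show n + 1 = q.length by omega, List.take_length]
        constructor
        · intro hb
          by_cases hb' : BadP T tI U (q.take n)
          · have hcc := ih1 hb'
            have hnf_eq : nfF T tI U q = nfF T tI U (q.take n) := nfF_eq q n (by omega) hb'
            have hnf_le : nfF T tI U (q.take n) ≤ n := le_trans (nfF_spec hb').1.1 (by omega)
            have htake : q.take (nfF T tI U q) = (q.take n).take (nfF T tI U (q.take n)) := by
              rw [hnf_eq, List.take_take, min_eq_left hnf_le]
            rw [htake]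
            intro k hk hge ht
            by_cases hkn : k < n
            · have hk' : k < (q.take n).length := by omega
              have hgeteq : q.get ⟨k, hk⟩ = (q.take n).get ⟨k, hk'⟩ := by
                simp [List.get_eq_getElem, List.getElem_take]
              have htk : q.take k = (q.take n).take k := by
                rw [List.take_take, min_eq_left (by omega : k ≤ n)]
              rw [hgeteq, htk]
              exact hcc k hk' hge ht
            · have hkeq : k = n := by omega
              subst hkeq
              have hgq := hpc k hk ht
              rw [hgq]
              exact hτ1 (q.take k) hb'
          · obtain ⟨hs2, hm2⟩ := nfF_spec hb
            have hnfq : nfF T tI U q = n + 1 := by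
              by_contra hne
              have hlt : nfF T tI U q ≤ n := by omega
              apply hb'
              exact ⟨nfF T tI U q, (takeP q n _ hlt (by omega)).mpr ⟨hs2.1, hs2.2⟩⟩
            intro k hk hge ht
            rw [List.length_take, hnfq, min_eq_left (by omega)] at hge
            exact absurd hk (by omega)
        · intro hnb
          have hnb' : ¬ BadP T tI U (q.take n) := fun hb' => hnb (badP_mono q n (by omega) hb')
          have hnf' := ih2 hnb'
          by_cases ht : Turn false n
          · have ha : q.get ⟨n, hnlt⟩ = τ (q.take n) := hpc n hnlt ht
            by_cases h2 : q.take n ∈ T ∧ ¬ Forces T tgtI true (q.take n) ∧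
                Turn false (q.take n).length ∧
                ∃ a, q.take n ++ [a] ∈ T ∧ ¬ Forces T tgtI true (q.take n ++ [a])
            · have hτq' : τ (q.take n) = Classical.choose h2.2.2.2 := by
                simp only [hτdef]; rw [dif_neg hnb', dif_pos h2]
              obtain ⟨hcT, hcF⟩ := Classical.choose_spec h2.2.2.2
              rw [hqeq, ha, hτq']
              exact hcF
            · intro _
              have h3 : ∃ b, q.take n ++ [b] ∈ T := ⟨q.get ⟨n, hnlt⟩, hqeq ▸ hq⟩
              have h4 : ∀ b, q.take n ++ [b] ∈ T → Forces T tgtI true (q.take n ++ [b]) := by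
                by_contra hc
                push_neg at hc
                exact h2 ⟨hq'T, hnf', by rwa [hq'len], hc⟩
              refine hnf' (Forces.opp _ hq'T ?_ h3 h4)
              rw [hq'len]
              exact (turn_false_iff_not_true n).mp ht
          · intro hf
            refine hnf' (Forces.own _ (q.get ⟨n, hnlt⟩) hq'T ?_ (hqeq ▸ hq) (hqeq ▸ hf))
            rw [hq'len]
            exact not_not.mp (fun hnt => ht ((turn_false_iff_not_true n).mpr hnt))
    refine ⟨τ, ?_, ?_, ?_⟩
    · intro q hq hntq ht hpc
      obtain ⟨i1, i2⟩ := inv q.length q hq rfl hpc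
      by_cases hb : BadP T tI U q
      · have hcc := i1 hb
        have hfp : Forces T tI false (q.take (nfF T tI U q)) := ((nfF_spec hb).1).2.2
        rw [hτ1 q hb]
        exact (hσR _ hfp).1 q hq (List.take_prefix _ _) hntq ht hcc
      · have hnfq := i2 hb
        have h3 : ∃ b, q ++ [b] ∈ T := by simpa [IsTerminal, hq] using hntq
        have h4 : ∃ b, q ++ [b] ∈ T ∧ ¬ Forces T tgtI true (q ++ [b]) := by
          by_contra hc
          push_neg at hc
          exact hnfq (Forces.opp q hq ((turn_false_iff_not_true _).mp ht) h3 hc)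
        have h2 : q ∈ T ∧ ¬ Forces T tgtI true q ∧ Turn false q.length ∧
            ∃ a, q ++ [a] ∈ T ∧ ¬ Forces T tgtI true (q ++ [a]) := ⟨hq, hnfq, ht, h4⟩
        have hτq : τ q = Classical.choose h2.2.2.2 := by
          simp only [hτdef]; rw [dif_neg hb, dif_pos h2]
        rw [hτq]
        exact (Classical.choose_spec h2.2.2.2).1
    · intro q hterm hpc
      obtain ⟨i1, i2⟩ := inv q.length q hterm.1 rfl hpc
      by_cases hb : BadP T tI U q
      · exact (hσR _ ((nfF_spec hb).1).2.2).2.1 q (List.take_prefix _ _) hterm (i1 hb)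
      · have hnfq := i2 hb
        have h1 : q ∉ tII := fun hh => hnfq (Forces.base q (Or.inl hh))
        rcases hcover q hterm with hh | hh
        · exact hh
        · exact absurd hh h1
    · rintro x hx hbc ⟨hxU, -⟩
      obtain ⟨m, hcyl⟩ := exists_cyl hU hxU
      have hpcs : ∀ k, PosConsistent false τ (prefixFn x k) := branchConsistent_prefix hbc
      obtain ⟨i1, i2⟩ := inv (prefixFn x m).length (prefixFn x m) (hx m) rfl (hpcs m)
      by_cases hbm : BadP T tI U (prefixFn x m)
      · -- after the switch point the play follows the reach-strategy: contradiction
        set n0 := nfF T tI U (prefixFn x m) with hn0def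
        have hn0le : n0 ≤ m := le_trans ((nfF_spec hbm).1).1 (le_of_eq (prefixFn_length x m))
        have hp0' : (prefixFn x m).take n0 = prefixFn x n0 := prefixFn_take x hn0le
        have hfp0 : Forces T tI false (prefixFn x n0) := by
          rw [← hp0']; exact ((nfF_spec hbm).1).2.2
        have hccall : ∀ k, m ≤ k →
            ConsFrom false (σR (prefixFn x n0)) (prefixFn x n0) (prefixFn x k) := by
          intro k hk
          have he : (prefixFn x k).take m = prefixFn x m := prefixFn_take x hk
          have hbk : BadP T tI U (prefixFn x k) := by
            apply badP_mono (prefixFn x k) m (by rw [prefixFn_length]; exact hk)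
            rw [he]; exact hbm
          obtain ⟨j1, _⟩ := inv (prefixFn x k).length (prefixFn x k) (hx k) rfl (hpcs k)
          have hnfk : nfF T tI U (prefixFn x k) = n0 := by
            have h5 := nfF_eq (prefixFn x k) m (by rw [prefixFn_length]; exact hk)
              (by rw [he]; exact hbm)
            rw [h5, he, hn0def]
          have htake : (prefixFn x k).take (nfF T tI U (prefixFn x k)) = prefixFn x n0 := by
            rw [hnfk, prefixFn_take x (le_trans hn0le hk)]
          have h6 := j1 hbk
          rwa [htake] at h6
        have hbcons : BConsFrom false (σR (prefixFn x n0)) (prefixFn x n0) x := by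
          intro j hge ht
          have hc := hccall (max m (j + 1)) (le_max_left _ _)
          have hjlt : j < (prefixFn x (max m (j + 1))).length := by
            rw [prefixFn_length]; omega
          have h5 := hc j hjlt hge ht
          rwa [List.get_eq_getElem, prefixFn_getElem,
              prefixFn_take x (by omega : j ≤ max m (j + 1))] at h5
        exact (hσR _ hfp0).2.2 x hx (by rw [prefixFn_length]) hbcons
      · have hnfq := i2 hbm
        have hcyl' : PCyl U (prefixFn x m) := by
          intro y hy
          exact hcyl y (by rwa [prefixFn_length] at hy)
        have hnP : ¬ PP T tI U (prefixFn x m) := by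
          intro hp
          apply hbm
          refine ⟨m, le_of_eq (prefixFn_length x m).symm, ?_⟩
          rw [prefixFn_take x le_rfl]
          exact hp
        have hnF : ¬ Forces T tI false (prefixFn x m) := fun hf => hnP ⟨hcyl', hf⟩
        exact hnfq (Forces.base _ (Or.inr ⟨hx m, hcyl', hnF⟩))

end Stmt6Aux5


/-- if some covering of `M` unravels `A` (the preimage of `A` is clopen in
the branch space of the covering tree), then `G(A; M)` is determined. -/
theorem stmt6 {X Y : Type*} [Nonempty X] [Nonempty Y] (M : TabooTree X) (Tc : TabooTree Y)
    (C : Covering Tc M) (A : Set (ℕ → X)) (hA : A ⊆ body M.T)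
    (h : Unravels C A) : Determined M A := by
  classical
  obtain ⟨⟨U, hUo, hUeq⟩, -⟩ := h
  have hdet : DeterminedOn Tc.T Tc.tabooI Tc.tabooII (bodyMap C.π ⁻¹' A ∩ body Tc.T) := by
    rw [hUeq]
    exact open_determined Tc.T Tc.tabooI Tc.tabooII Tc.isTree Tc.tabooI_terminal
      Tc.tabooII_terminal Tc.taboo_cover U hUo
  rcases hdet with ⟨σ, hσs, hσf, hσb⟩ | ⟨τ, hτs, hτf, hτb⟩
  · left
    refine ⟨C.φ true σ, C.φ_strategy true σ hσs, ?_, ?_⟩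
    · intro p hterm hpc
      obtain ⟨xt, hplay, hcons, hle, hdis⟩ := C.lifting true σ hσs (.fin p) hterm hpc
      cases xt with
      | inf y => simp [Play.map, Play.le] at hle
      | fin q =>
        have hqT : IsTerminal Tc.T q := hplay
        have hqtab : q ∈ Tc.tabooII := hσf q hqT hcons
        rcases hdis with heq | htb
        · have hπ : C.π q = p := by simpa [Play.map] using heq
          rcases M.taboo_cover p hterm with hp1 | hp2
          · exact absurd hqtab
              (Set.disjoint_left.mp Tc.taboo_disjoint (C.π_tabooI q hqT.1 (hπ ▸ hp1)))
          · exact hp2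
        · have hqI : q ∈ Tc.tabooI := by simpa [PlayTabooFor] using htb
          exact absurd hqtab (Set.disjoint_left.mp Tc.taboo_disjoint hqI)
    · intro x hx hbc
      obtain ⟨xt, hplay, hcons, hle, hdis⟩ := C.lifting true σ hσs (.inf x) hx hbc
      cases xt with
      | fin q =>
        have hqT : IsTerminal Tc.T q := hplay
        have hqtab : q ∈ Tc.tabooII := hσf q hqT hcons
        have hqI : q ∈ Tc.tabooI := by
          rcases hdis with heq | htb
          · simp [Play.map] at heq
          · simpa [PlayTabooFor] using htb
        exact absurd hqtab (Set.disjoint_left.mp Tc.taboo_disjoint hqI)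
      | inf y =>
        have heq : bodyMap C.π y = x := by
          rcases hdis with heq | htb
          · simpa [Play.map] using heq
          · simp [PlayTabooFor] at htb
        have hyA : y ∈ bodyMap C.π ⁻¹' A ∩ body Tc.T := hσb y hplay hcons
        have h1 : bodyMap C.π y ∈ A := hyA.1
        rwa [heq] at h1
  · right
    refine ⟨C.φ false τ, C.φ_strategy false τ hτs, ?_, ?_⟩
    · intro p hterm hpc
      obtain ⟨xt, hplay, hcons, hle, hdis⟩ := C.lifting false τ hτs (.fin p) hterm hpc
      cases xt with
      | inf y => simp [Play.map, Play.le] at hle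
      | fin q =>
        have hqT : IsTerminal Tc.T q := hplay
        have hqtab : q ∈ Tc.tabooI := hτf q hqT hcons
        rcases hdis with heq | htb
        · have hπ : C.π q = p := by simpa [Play.map] using heq
          rcases M.taboo_cover p hterm with hp1 | hp2
          · exact hp1
          · exact absurd (C.π_tabooII q hqT.1 (hπ ▸ hp2))
              (Set.disjoint_left.mp Tc.taboo_disjoint hqtab)
        · have hqII : q ∈ Tc.tabooII := by simpa [PlayTabooFor] using htb
          exact absurd hqII (Set.disjoint_left.mp Tc.taboo_disjoint hqtab)
    · intro x hx hbc
      obtain ⟨xt, hplay, hcons, hle, hdis⟩ := C.lifting false τ hτs (.inf x) hx hbc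
      cases xt with
      | fin q =>
        have hqT : IsTerminal Tc.T q := hplay
        have hqtab : q ∈ Tc.tabooI := hτf q hqT hcons
        have hqII : q ∈ Tc.tabooII := by
          rcases hdis with heq | htb
          · simp [Play.map] at heq
          · simpa [PlayTabooFor] using htb
        exact absurd hqII (Set.disjoint_left.mp Tc.taboo_disjoint hqtab)
      | inf y =>
        have heq : bodyMap C.π y = x := by
          rcases hdis with heq | htb
          · simpa [Play.map] using heq
          · simp [PlayTabooFor] at htb
        have hyA : y ∉ bodyMap C.π ⁻¹' A ∩ body Tc.T := hτb y hplay hcons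
        intro hxA
        exact hyA ⟨by rwa [Set.mem_preimage, heq], hplay⟩
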